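/- For any real q ≠ 1 and any positive integer n with k = ⌊log₂ n⌋, (1/n)·S_q(n) = (q/2)·(1 − q^{k+1})/(1 − q) − (1/(2n))·Σ_{i=1}^{k+1} (2q)^i · τ(n/2^i), where τ(x) = dist(x, ℤ). -/

import Mathlib

/-!
Swapping the two summations in `S_q(n)`, the `i`-th digit contributes `q^(i+1)` times the number
of `k < n` whose `i`-th bit is set. That bit is periodic of period `2^(i+1)`, zero on the first half
of each period and one on the second, so the count is `n/2 - 2^i τ(n/2^(i+1))`: the defect
`n - 2·count` is the distance from `n` to the nearest multiple of `2^(i+1)`. Only the digits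
`i ≤ ⌊log₂ n⌋` occur, and the main terms `(n/2) q^(i+1)` sum to a geometric series.
-/

open scoped BigOperators

/-- distance from `x` to the nearest integer -/
noncomputable def tau (x : ℝ) : ℝ := |x - round x|

/-- q-weighted binary digit sum: `s_q(n) = Σ ω_i q^(i+1)` -/
noncomputable def sdigq (q : ℝ) (n : ℕ) : ℝ :=
  ∑ i ∈ Finset.range n, if n.testBit i then q ^ (i + 1) else 0

/-- `S_q(n) = Σ_{k<n} s_q(k)` -/
noncomputable def Sdigq (q : ℝ) (n : ℕ) : ℝ := ∑ k ∈ Finset.range n, sdigq q k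

/-- Takagi–Landsberg function -/
noncomputable def Ta (a x : ℝ) : ℝ := ∑' n : ℕ, a ^ n * tau (2 ^ n * x)

open Finset

theorem Nat.testBit_iff_two_pow_le_mod (k i : ℕ) : k.testBit i ↔ 2 ^ i ≤ k % 2 ^ (i + 1) := by
  have hlt : k % 2 ^ (i + 1) < 2 ^ (i + 1) := Nat.mod_lt _ (by positivity)
  have hbit : (k % 2 ^ (i + 1)).testBit i = k.testBit i := by simp
  rw [← hbit]
  constructor
  · intro h
    by_contra! h'
    simp [Nat.testBit_lt_two_pow h'] at h
  · exact fun h => Nat.testBit_of_two_pow_le_and_two_pow_add_one_gt h hlt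

theorem two_mul_card_filter_le_mod_add_min {M : ℕ} (hM : 0 < M) (n : ℕ) :
    2 * #{k ∈ range n | M ≤ k % (2 * M)} + min (n % (2 * M)) (2 * M - n % (2 * M)) = n := by
  induction n with
  | zero => simp
  | succ n ih =>
    have hr : n % (2 * M) < 2 * M := Nat.mod_lt _ (by omega)
    have hsucc := Nat.add_mod_eq_ite (k := 2 * M) (m := n) (n := 1)
    rw [Nat.mod_eq_of_lt (by omega : 1 < 2 * M)] at hsucc
    rw [range_add_one, filter_insert]
    split_ifs at hsucc ⊢
    all_goals first
      | (rw [card_insert_of_notMem (by simp)]; omega)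
      | omega

theorem card_filter_testBit_eq (i n : ℕ) :
    (#{k ∈ range n | k.testBit i} : ℝ) = n / 2 - 2 ^ i * tau (n / 2 ^ (i + 1)) := by
  have hcount := two_mul_card_filter_le_mod_add_min (M := 2 ^ i) (by positivity) n
  rw [← pow_succ'] at hcount
  have hcast : (2 * #{k ∈ range n | 2 ^ i ≤ k % 2 ^ (i + 1)} +
      min (n % 2 ^ (i + 1)) (2 ^ (i + 1) - n % 2 ^ (i + 1)) : ℕ) = (n : ℝ) := by
    exact_mod_cast hcount
  have htau : tau (n / 2 ^ (i + 1)) =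
      (min (n % 2 ^ (i + 1)) (2 ^ (i + 1) - n % 2 ^ (i + 1)) : ℕ) / (2 ^ (i + 1) : ℕ) := by
    rw [tau, ← abs_sub_round_div_natCast_eq]
    push_cast
    rfl
  simp only [Nat.testBit_iff_two_pow_le_mod]
  rw [htau, ← hcast]
  push_cast
  field_simp
  ring

theorem sdigq_eq_sum_range (q : ℝ) {k N : ℕ} (hk : k < 2 ^ N) :
    sdigq q k = ∑ i ∈ range N, if k.testBit i then q ^ (i + 1) else 0 := by
  have extend : ∀ {a b : ℕ}, k < 2 ^ a → a ≤ b →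
      ∑ i ∈ range a, (if k.testBit i then q ^ (i + 1) else 0) =
        ∑ i ∈ range b, if k.testBit i then q ^ (i + 1) else 0 := fun ha hab =>
    sum_subset (range_subset_range.2 hab) fun i _ hi => by
      rw [Nat.testBit_lt_two_pow (ha.trans_le (Nat.pow_le_pow_right two_pos (by simpa using hi))),
        if_neg Bool.false_ne_true]
  rw [sdigq, extend Nat.lt_two_pow_self (le_max_left k N), ← extend hk (le_max_right k N)]

theorem Sdigq_eq_sum_card_filter_testBit (q : ℝ) {n N : ℕ} (hn : n ≤ 2 ^ N) :
    Sdigq q n = ∑ i ∈ range N, q ^ (i + 1) * #{k ∈ range n | k.testBit i} := by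
  rw [Sdigq, sum_congr rfl fun k hk => sdigq_eq_sum_range q ((mem_range.1 hk).trans_le hn),
    sum_comm]
  refine sum_congr rfl fun i _ => ?_
  rw [sum_ite, sum_const_zero, add_zero, sum_const, nsmul_eq_mul, mul_comm]

theorem Sdigq_eq_sum_tau (q : ℝ) {n N : ℕ} (hn : n ≤ 2 ^ N) :
    Sdigq q n = n / 2 * ∑ i ∈ range N, q ^ (i + 1) -
      1 / 2 * ∑ i ∈ range N, (2 * q) ^ (i + 1) * tau (n / 2 ^ (i + 1)) := by
  rw [Sdigq_eq_sum_card_filter_testBit q hn, mul_sum, mul_sum, ← sum_sub_distrib]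
  refine sum_congr rfl fun i _ => ?_
  rw [card_filter_testBit_eq, mul_pow]
  ring

theorem Sq_dyadic_formula (q : ℝ) (hq : q ≠ 1) (n : ℕ) (hn : 0 < n) :
    (1 / (n : ℝ)) * Sdigq q n =
      (q / 2) * (1 - q ^ (Nat.log 2 n + 1)) / (1 - q)
        - (1 / (2 * (n : ℝ))) *
          ∑ i ∈ Finset.Icc 1 (Nat.log 2 n + 1), (2 * q) ^ i * tau ((n : ℝ) / 2 ^ i) := by
  set K := Nat.log 2 n
  have hgeom : ∑ i ∈ range (K + 1), q ^ (i + 1) = q * (1 - q ^ (K + 1)) / (1 - q) := by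
    rw [sum_congr rfl fun i _ => pow_succ' q i, ← mul_sum, geom_sum_eq hq, ← neg_div_neg_eq,
      neg_sub, neg_sub, mul_div_assoc]
  have hIcc : ∑ i ∈ Icc 1 (K + 1), (2 * q) ^ i * tau (n / 2 ^ i) =
      ∑ i ∈ range (K + 1), (2 * q) ^ (i + 1) * tau (n / 2 ^ (i + 1)) := by
    rw [← Ico_add_one_right_eq_Icc, sum_Ico_eq_sum_range, Nat.add_sub_cancel]
    simp_rw [add_comm 1]
  have hn' : (n : ℝ) ≠ 0 := Nat.cast_ne_zero.2 hn.ne'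
  rw [Sdigq_eq_sum_tau q (Nat.lt_pow_succ_log_self one_lt_two n).le, hgeom, hIcc]
  field_simp
  ring
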